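/- arXiv:2411.07789 — 2 statements merged into one kernel-verified Lean document; each statement's English description precedes it below -/
import Mathlib

section
/- Let ψ : ℝ³ → ℂ⁴ be continuously differentiable and let x ∈ ℝ³ with x ≠ 0. Then −i Σ_{j=1}^3 α_j ∂_jψ(x) = −i (α·x̂) [ (∂_rψ)(x) + ψ(x)/|x| − (1/|x|)((1+2S·L)ψ)(x) ]. -/
/-!
The α's are the off-diagonal blocks of the Pauli matrices, so the Pauli identity
`(σ·a)(σ·b) = a·b + i σ·(a×b)` lifts to `(α·a)(α·b) = a·b + 2i S·(a×b)`. Taking `a = x̂` and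
`b = ∇` (whose components commute) gives `(α·x̂)(α·∇) = ∂_r + 2i S·(x̂×∇) = ∂_r - (2/|x|) S·L`,
because `x×∇ = iL`. Multiplying on the left by `α·x̂` and using `(α·x̂)² = |x̂|² = 1` gives the
decomposition.
-/

open MeasureTheory Real ComplexConjugate
open scoped InnerProductSpace

noncomputable section

abbrev R3 := EuclideanSpace ℝ (Fin 3)
abbrev C4 := EuclideanSpace ℂ (Fin 4)

/-- The Pauli matrices. -/
def pauli : Fin 3 → Matrix (Fin 2) (Fin 2) ℂ
  | 0 => !![0, 1; 1, 0]
  | 1 => !![0, -Complex.I; Complex.I, 0]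
  | 2 => !![1, 0; 0, -1]

/-- Reindex a 2×2 block matrix as a 4×4 matrix. -/
def blocks4 (A B C D : Matrix (Fin 2) (Fin 2) ℂ) : Matrix (Fin 4) (Fin 4) ℂ :=
  Matrix.reindex finSumFinEquiv finSumFinEquiv (Matrix.fromBlocks A B C D)

/-- The Dirac alpha matrices. -/
def diracAlpha (j : Fin 3) : Matrix (Fin 4) (Fin 4) ℂ :=
  blocks4 0 (pauli j) (pauli j) 0

/-- The Dirac beta matrix. -/
def diracBeta : Matrix (Fin 4) (Fin 4) ℂ :=
  blocks4 1 0 0 (-1)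

/-- The spin matrices Sⱼ. -/
def spinS (j : Fin 3) : Matrix (Fin 4) (Fin 4) ℂ :=
  (1/2 : ℂ) • blocks4 (pauli j) 0 0 (pauli j)

/-- Action of a 4×4 complex matrix on ℂ⁴. -/
def act (M : Matrix (Fin 4) (Fin 4) ℂ) (v : C4) : C4 :=
  WithLp.toLp 2 (M.mulVec v)

/-- Partial derivative of a ℂ⁴-valued function on ℝ³. -/
def pderiv3 (j : Fin 3) (ψ : R3 → C4) (x : R3) : C4 :=
  fderiv ℝ ψ x (EuclideanSpace.single j 1)

/-- The free Dirac operator with mass m. -/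
def diracOp (m : ℝ) (ψ : R3 → C4) (x : R3) : C4 :=
  (-Complex.I) • ∑ j, act (diracAlpha j) (pderiv3 j ψ x) + (m : ℂ) • act diracBeta (ψ x)

/-- The massless Dirac operator `-iα·∇`. -/
def masslessDirac (ψ : R3 → C4) (x : R3) : C4 :=
  (-Complex.I) • ∑ j, act (diracAlpha j) (pderiv3 j ψ x)

/-- The orbital angular momentum component Lⱼψ = −i (x × ∇ψ)ⱼ. -/
def orbL (j : Fin 3) (ψ : R3 → C4) (x : R3) : C4 :=
  (-Complex.I) • ((x (j + 1) : ℂ) • pderiv3 (j + 2) ψ x - (x (j + 2) : ℂ) • pderiv3 (j + 1) ψ x)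

/-- The spin-orbit operator (1 + 2 S·L). -/
def spinOrbit (ψ : R3 → C4) (x : R3) : C4 :=
  ψ x + (2 : ℂ) • ∑ j, act (spinS j) (orbL j ψ x)

/-- The radial derivative of a scalar function on ℝ³. -/
def radialDeriv (f : R3 → ℝ) (x : R3) : ℝ :=
  ∑ j, (x j / ‖x‖) * fderiv ℝ f x (EuclideanSpace.single j 1)

/-- The radial derivative of a ℂ⁴-valued function on ℝ³. -/
def radialDerivV (ψ : R3 → C4) (x : R3) : C4 :=
  ∑ j, ((x j / ‖x‖ : ℝ) : ℂ) • pderiv3 j ψ x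

/-- α·x̂, the Dirac matrix contracted with the unit radial vector. -/
def alphaHat (x : R3) : Matrix (Fin 4) (Fin 4) ℂ :=
  ∑ j, ((x j / ‖x‖ : ℝ) : ℂ) • diracAlpha j

/-- A function on ℝ³ is radial if it depends only on the norm of its argument. -/
def IsRadial {E : Type*} (f : R3 → E) : Prop :=
  ∀ x y : R3, ‖x‖ = ‖y‖ → f x = f y

open Matrix Complex

def pauliDot (a : Fin 3 → ℂ) : Matrix (Fin 2) (Fin 2) ℂ := ∑ j, a j • pauli j

theorem pauliDot_mul_pauliDot (a b : Fin 3 → ℂ) :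
    pauliDot a * pauliDot b = (a ⬝ᵥ b) • 1 + I • pauliDot (a ⨯₃ b) := by
  ext i j
  fin_cases i <;> fin_cases j <;>
    simp [pauliDot, pauli, Fin.sum_univ_three, cross_apply, dotProduct, Matrix.mul_apply] <;>
    ring_nf <;> simp only [I_sq] <;> ring

theorem blocks4_add (A B C D A' B' C' D' : Matrix (Fin 2) (Fin 2) ℂ) :
    blocks4 A B C D + blocks4 A' B' C' D' = blocks4 (A + A') (B + B') (C + C') (D + D') := by
  simp [blocks4, ← fromBlocks_add, submatrix_add]

theorem blocks4_smul (c : ℂ) (A B C D : Matrix (Fin 2) (Fin 2) ℂ) :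
    c • blocks4 A B C D = blocks4 (c • A) (c • B) (c • C) (c • D) := by
  simp [blocks4, ← fromBlocks_smul, submatrix_smul]

theorem blocks4_mul (A B C D A' B' C' D' : Matrix (Fin 2) (Fin 2) ℂ) :
    blocks4 A B C D * blocks4 A' B' C' D' =
      blocks4 (A * A' + B * C') (A * B' + B * D') (C * A' + D * C') (C * B' + D * D') := by
  simp [blocks4, ← fromBlocks_multiply]

theorem blocks4_one : blocks4 1 0 0 1 = 1 := by
  simp [blocks4]

def alphaDot (a : Fin 3 → ℂ) : Matrix (Fin 4) (Fin 4) ℂ := ∑ j, a j • diracAlpha j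

theorem alphaDot_eq_blocks4 (a : Fin 3 → ℂ) :
    alphaDot a = blocks4 0 (pauliDot a) (pauliDot a) 0 := by
  simp [alphaDot, diracAlpha, pauliDot, Fin.sum_univ_three, blocks4_smul, blocks4_add]

theorem sum_smul_spinS_eq_blocks4 (c : Fin 3 → ℂ) :
    ∑ l, c l • spinS l = (1 / 2 : ℂ) • blocks4 (pauliDot c) 0 0 (pauliDot c) := by
  simp [spinS, pauliDot, Fin.sum_univ_three, blocks4_smul, blocks4_add, smul_smul, mul_comm]

theorem alphaDot_mul_alphaDot (a b : Fin 3 → ℂ) :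
    alphaDot a * alphaDot b = (a ⬝ᵥ b) • 1 + (2 * I) • ∑ l, (a ⨯₃ b) l • spinS l := by
  rw [alphaDot_eq_blocks4, alphaDot_eq_blocks4, blocks4_mul, sum_smul_spinS_eq_blocks4,
    ← blocks4_one, pauliDot_mul_pauliDot, smul_smul, show (2 * I * (1 / 2) : ℂ) = I by ring,
    blocks4_smul, blocks4_smul, blocks4_add]
  simp

theorem alphaDot_mul_self (a : Fin 3 → ℂ) : alphaDot a * alphaDot a = (a ⬝ᵥ a) • 1 := by
  simp [alphaDot_mul_alphaDot]

theorem diracAlpha_eq_alphaDot_single (k : Fin 3) : diracAlpha k = alphaDot (Pi.single k 1) := by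
  simp [alphaDot, Pi.single_apply]

theorem act_eq_toEuclideanCLM (M : Matrix (Fin 4) (Fin 4) ℂ) :
    act M = Matrix.toEuclideanCLM (𝕜 := ℂ) M := rfl

theorem act_mul (M N : Matrix (Fin 4) (Fin 4) ℂ) (v : C4) : act (M * N) v = act M (act N v) := by
  simp [act_eq_toEuclideanCLM]

theorem act_one (v : C4) : act 1 v = v := by
  simp [act_eq_toEuclideanCLM]

/-- `alphaDot_mul_alphaDot` with `b` a vector of commuting operators, here a gradient `v k = ∂ₖψ`;
the last sum is `2i S·(a × v)`. -/
theorem act_alphaDot_sum_diracAlpha (a : Fin 3 → ℂ) (v : Fin 3 → C4) :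
    act (alphaDot a) (∑ k, act (diracAlpha k) (v k)) =
      ∑ k, a k • v k +
        (2 * I) • ∑ l, act (spinS l) (a (l + 1) • v (l + 2) - a (l + 2) • v (l + 1)) := by
  rw [act_eq_toEuclideanCLM, map_sum]
  simp only [← act_eq_toEuclideanCLM, ← act_mul, diracAlpha_eq_alphaDot_single,
    alphaDot_mul_alphaDot]
  simp only [dotProduct_single, mul_one, cross_apply, Fin.isValue, Pi.single_apply, mul_ite,
    mul_zero, Fin.sum_univ_three, cons_val_zero, cons_val_one, cons_val, smul_add,
    act_eq_toEuclideanCLM, map_add, map_smul, map_one, map_sub, _root_.add_apply,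
    _root_.smul_apply, one_apply_eq_self, Fin.reduceEq, ↓reduceIte, one_ne_zero, zero_ne_one,
    sub_self, zero_smul, smul_zero, sub_zero, zero_add, zero_sub, add_zero, neg_smul, smul_neg,
    Finset.sum_sub_distrib, Fin.reduceAdd]
  module

def unitRadial (x : R3) : Fin 3 → ℂ := fun j => ((x j / ‖x‖ : ℝ) : ℂ)

theorem alphaHat_eq_alphaDot (x : R3) : alphaHat x = alphaDot (unitRadial x) := rfl

theorem unitRadial_dotProduct_self {x : R3} (hx : x ≠ 0) :
    unitRadial x ⬝ᵥ unitRadial x = 1 := by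
  have h : ∑ j, (x j / ‖x‖) ^ 2 = 1 := by
    simp_rw [div_pow, ← Finset.sum_div, ← EuclideanSpace.real_norm_sq_eq]
    exact div_self (pow_ne_zero 2 (norm_ne_zero_iff.mpr hx))
  simp only [dotProduct, unitRadial, ← sq]
  exact_mod_cast h

theorem radialDerivV_add_sub_spinOrbit (ψ : R3 → C4) (x : R3) :
    radialDerivV ψ x + ((‖x‖⁻¹ : ℝ) : ℂ) • ψ x - ((‖x‖⁻¹ : ℝ) : ℂ) • spinOrbit ψ x =
      ∑ k, unitRadial x k • pderiv3 k ψ x +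
        (2 * I) • ∑ l, act (spinS l) (unitRadial x (l + 1) • pderiv3 (l + 2) ψ x -
          unitRadial x (l + 2) • pderiv3 (l + 1) ψ x) := by
  simp only [radialDerivV, spinOrbit, orbL, unitRadial, ofReal_div, ofReal_inv, coe_smul,
    Fin.sum_univ_three, Fin.isValue, Fin.reduceAdd, act_eq_toEuclideanCLM, map_neg, map_smul,
    map_sub, ContinuousLinearMap.map_smul_of_tower, Finset.sum_neg_distrib, Finset.sum_sub_distrib,
    neg_smul, smul_add, smul_neg, neg_add_rev, zero_add]
  module

theorem dirac_polar_decomposition_general (ψ : R3 → C4)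
    (x : R3) (hx : x ≠ 0) :
    (-Complex.I) • ∑ j, act (diracAlpha j) (pderiv3 j ψ x) =
      (-Complex.I) • act (alphaHat x)
        (radialDerivV ψ x + ((‖x‖⁻¹ : ℝ) : ℂ) • ψ x
          - ((‖x‖⁻¹ : ℝ) : ℂ) • spinOrbit ψ x) := by
  rw [radialDerivV_add_sub_spinOrbit, ← act_alphaDot_sum_diracAlpha, alphaHat_eq_alphaDot,
    ← act_mul, alphaDot_mul_self, unitRadial_dotProduct_self hx, one_smul, act_one]

/-- The polar decomposition of the massless Dirac operator:
`-iα·∇ = -i(α·x̂)(∂_r + 1/|x| - (1/|x|)(1+2S·L))`. -/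
theorem dirac_polar_decomposition (ψ : R3 → C4) (hψ : ContDiff ℝ 1 ψ)
    (x : R3) (hx : x ≠ 0) :
    (-Complex.I) • ∑ j, act (diracAlpha j) (pderiv3 j ψ x) =
      (-Complex.I) • act (alphaHat x)
        (radialDerivV ψ x + ((‖x‖⁻¹ : ℝ) : ℂ) • ψ x
          - ((‖x‖⁻¹ : ℝ) : ℂ) • spinOrbit ψ x) :=
  dirac_polar_decomposition_general ψ x hx
end
end

section
/- Let c ∈ ℂ⁴ and define ψ₀ : ℝ³ → ℂ⁴ by ψ₀(x) = exp(e^{1−|x|}) c. Then all three integrals below are finite and equal: e² ∫_{ℝ³} |ψ₀(x)|² e^{−|x|} dx = e² ∫_{ℝ³} |((1+2S·L)ψ₀)(x)|² e^{−|x|} dx = ∫_{ℝ³} |−i Σ_{j=1}^3 α_j ∂_jψ₀(x)|² e^{|x|} dx. In particular, for c ≠ 0, ψ₀ is a nonzero minimizer attaining equality in the weighted Hardy–Dirac inequality with m = 0 and weights ω = η = e^{|x|}. -/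
open MeasureTheory Real ComplexConjugate
open scoped InnerProductSpace

noncomputable section

/-!
`ψ₀ = f(|x|) c` with `f r = exp (exp (1 - r))` is a radial function times a constant spinor.
Its gradient is `f'(|x|) c ⊗ x̂`, so the angular momentum `x × ∇` annihilates it and
`(1 + 2 S·L) ψ₀ = ψ₀`, while `-iα·∇ψ₀ = -i f'(|x|) (α·x̂) c` with `α·x̂` an isometry of `ℂ⁴`.
Since `f' = -e^{1-r} f`, we get `|f'|² e^{r} = e² f² e^{-r}`, which matches the two weights.
-/

theorem integrable_exp_neg_norm {E : Type*} [NormedAddCommGroup E] [NormedSpace ℝ E]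
    [FiniteDimensional ℝ E] [MeasurableSpace E] [BorelSpace E] (μ : Measure E)
    [μ.IsAddHaarMeasure] :
    Integrable (fun x : E => Real.exp (-‖x‖)) μ := by
  cases subsingleton_or_nontrivial E
  · exact (integrable_const (1 : ℝ)).congr (.of_forall fun x => by simp [Subsingleton.elim x 0])
  rw [integrable_fun_norm_addHaar μ (f := fun r => Real.exp (-r))]
  have hdim : 0 < Module.finrank ℝ E := Module.finrank_pos
  refine (GammaIntegral_convergent (s := Module.finrank ℝ E) (by positivity)).congr_fun
    (fun r _ => ?_) measurableSet_Ioi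
  rw [smul_eq_mul, mul_comm, ← Real.rpow_natCast, Nat.cast_sub hdim, Nat.cast_one]

theorem hasFDerivAt_norm_of_ne_zero {F : Type*} [NormedAddCommGroup F] [InnerProductSpace ℝ F]
    {x : F} (hx : x ≠ 0) : HasFDerivAt (‖·‖) (‖x‖⁻¹ • innerSL ℝ x) x := by
  have h := (hasStrictFDerivAt_norm_sq x).hasFDerivAt.sqrt (by positivity)
  simp only [Real.sqrt_sq (norm_nonneg _)] at h
  convert h using 1
  ext v
  simp only [smul_apply, coe_innerSL_apply, smul_eq_mul, nsmul_eq_mul, Nat.cast_ofNat]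
  field_simp

lemma diracAlpha_zero_eq : diracAlpha 0 = !![0, 0, 0, 1; 0, 0, 1, 0; 0, 1, 0, 0; 1, 0, 0, 0] := by
  ext i k
  fin_cases i <;> fin_cases k <;> rfl

lemma diracAlpha_one_eq : diracAlpha 1 =
    !![0, 0, 0, -Complex.I; 0, 0, Complex.I, 0; 0, -Complex.I, 0, 0; Complex.I, 0, 0, 0] := by
  ext i k
  fin_cases i <;> fin_cases k <;> rfl

lemma diracAlpha_two_eq : diracAlpha 2 = !![0, 0, 1, 0; 0, 0, 0, -1; 1, 0, 0, 0; 0, -1, 0, 0] := by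
  ext i k
  fin_cases i <;> fin_cases k <;> rfl

lemma norm_sq_act_sum_smul_diracAlpha (u : R3) (c : C4) :
    ‖act (∑ j, (u j : ℂ) • diracAlpha j) c‖ ^ 2 = ‖u‖ ^ 2 * ‖c‖ ^ 2 := by
  simp only [EuclideanSpace.norm_sq_eq, Fin.sum_univ_three, Fin.sum_univ_four, act,
    diracAlpha_zero_eq, diracAlpha_one_eq, diracAlpha_two_eq, Matrix.mulVec, dotProduct]
  simp only [Matrix.smul_of, Matrix.smul_cons, smul_eq_mul, mul_zero, mul_one, Matrix.smul_empty,
    mul_neg, Matrix.of_add_of, Matrix.add_cons, Matrix.head_cons, add_zero, Matrix.tail_cons,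
    Matrix.empty_add_empty, Matrix.of_apply, Matrix.cons_val', Matrix.cons_val_zero,
    Matrix.cons_val_fin_one, zero_mul, Matrix.cons_val_one, Matrix.cons_val, zero_add,
    Complex.sq_norm, Complex.normSq_apply, Complex.add_re, Complex.mul_re, Complex.ofReal_re,
    Complex.ofReal_im, Complex.neg_re, Complex.I_re, Complex.I_im, Complex.add_im,
    Complex.neg_im, Complex.mul_im, Real.norm_eq_abs, sq_abs]
  ring

lemma act_smul (M : Matrix (Fin 4) (Fin 4) ℂ) (k : ℂ) (v : C4) :
    act M (k • v) = k • act M v := by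
  simp [act, Matrix.mulVec_smul]

lemma act_sum_smul {ι : Type*} (s : Finset ι) (k : ι → ℂ) (M : ι → Matrix (Fin 4) (Fin 4) ℂ)
    (v : C4) : act (∑ j ∈ s, k j • M j) v = ∑ j ∈ s, k j • act (M j) v := by
  simp [act, Matrix.sum_mulVec, Matrix.smul_mulVec]

lemma norm_act_alphaHat {x : R3} (hx : x ≠ 0) (c : C4) : ‖act (alphaHat x) c‖ = ‖c‖ := by
  have h := norm_sq_act_sum_smul_diracAlpha (‖x‖⁻¹ • x) c
  rw [norm_smul, norm_inv, norm_norm, inv_mul_cancel₀ (norm_ne_zero_iff.mpr hx), one_pow,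
    one_mul] at h
  have hu : ∀ j, (((‖x‖⁻¹ • x) j : ℝ) : ℂ) = ((x j / ‖x‖ : ℝ) : ℂ) := fun j => by
    simp [div_eq_inv_mul]
  simp only [hu] at h
  exact (pow_left_inj₀ (norm_nonneg _) (norm_nonneg _) two_ne_zero).mp h

section RadialSpinor

variable {g : ℝ → ℝ} (c : C4)

theorem pderiv3_radial_smul {x : R3} (hx : x ≠ 0) (hg : DifferentiableAt ℝ g ‖x‖) (j : Fin 3) :
    pderiv3 j (fun y => (g ‖y‖ : ℂ) • c) x = ((deriv g ‖x‖ * (x j / ‖x‖) : ℝ) : ℂ) • c := by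
  have hr : HasFDerivAt (fun y : R3 => g ‖y‖) (deriv g ‖x‖ • ‖x‖⁻¹ • innerSL ℝ x) x :=
    hg.hasDerivAt.comp_hasFDerivAt x (hasFDerivAt_norm_of_ne_zero hx)
  have hψ : HasFDerivAt (fun y : R3 => (g ‖y‖ : ℂ) • c)
      ((Complex.ofRealCLM.comp (deriv g ‖x‖ • ‖x‖⁻¹ • innerSL ℝ x)).smulRight c) x :=
    (Complex.ofRealCLM.hasFDerivAt.comp x hr).smul_const c
  rw [pderiv3, hψ.fderiv]
  simp [EuclideanSpace.inner_single_right, div_eq_inv_mul]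

theorem orbL_radial_smul (hg : ∀ r, 0 < r → DifferentiableAt ℝ g r) (j : Fin 3) (x : R3) :
    orbL j (fun y => (g ‖y‖ : ℂ) • c) x = 0 := by
  rcases eq_or_ne x 0 with rfl | hx
  · simp [orbL]
  have hg' := hg ‖x‖ (norm_pos_iff.mpr hx)
  have hcross : (x (j + 1) : ℂ) * ((deriv g ‖x‖ * (x (j + 2) / ‖x‖) : ℝ) : ℂ) -
      (x (j + 2) : ℂ) * ((deriv g ‖x‖ * (x (j + 1) / ‖x‖) : ℝ) : ℂ) = 0 := by
    push_cast
    ring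
  rw [orbL, pderiv3_radial_smul c hx hg', pderiv3_radial_smul c hx hg', smul_smul, smul_smul,
    ← sub_smul, hcross, zero_smul, smul_zero]

theorem spinOrbit_radial_smul (hg : ∀ r, 0 < r → DifferentiableAt ℝ g r) :
    spinOrbit (fun y => (g ‖y‖ : ℂ) • c) = fun y => (g ‖y‖ : ℂ) • c := by
  ext1 x
  simp only [spinOrbit, orbL_radial_smul c hg]
  simp [act]

theorem masslessDirac_radial_smul {x : R3} (hx : x ≠ 0) (hg : DifferentiableAt ℝ g ‖x‖) :
    masslessDirac (fun y => (g ‖y‖ : ℂ) • c) x =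
      (-Complex.I * deriv g ‖x‖) • act (alphaHat x) c := by
  simp only [masslessDirac, pderiv3_radial_smul c hx hg, alphaHat, act_sum_smul, act_smul,
    Finset.smul_sum, smul_smul]
  refine Finset.sum_congr rfl fun j _ => ?_
  rw [Complex.ofReal_mul, mul_assoc]

theorem norm_masslessDirac_radial_smul {x : R3} (hx : x ≠ 0) (hg : DifferentiableAt ℝ g ‖x‖) :
    ‖masslessDirac (fun y => (g ‖y‖ : ℂ) • c) x‖ = |deriv g ‖x‖| * ‖c‖ := by
  rw [masslessDirac_radial_smul c hx hg, norm_smul, norm_act_alphaHat hx]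
  simp

end RadialSpinor

lemma hasDerivAt_exp_exp_one_sub (r : ℝ) :
    HasDerivAt (fun r => Real.exp (Real.exp (1 - r)))
      (-(Real.exp (1 - r) * Real.exp (Real.exp (1 - r)))) r := by
  convert ((hasDerivAt_id' r).const_sub 1).exp.exp using 1
  ring

lemma exp_one_sub_sq_mul_exp (r : ℝ) :
    Real.exp (1 - r) ^ 2 * Real.exp r = Real.exp 1 ^ 2 * Real.exp (-r) := by
  simp only [sq, ← Real.exp_add]
  ring_nf

lemma integrable_norm_sq_exp_exp_one_sub_smul_mul_exp_neg_norm (c : C4) :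
    Integrable fun x : R3 => ‖(Real.exp (Real.exp (1 - ‖x‖)) : ℂ) • c‖ ^ 2 * Real.exp (-‖x‖) := by
  refine (integrable_exp_neg_norm volume).bdd_mul (c := (Real.exp (Real.exp 1) * ‖c‖) ^ 2)
    (by fun_prop) (.of_forall fun x => ?_)
  rw [norm_pow, norm_norm, norm_smul, Complex.norm_real, Real.norm_of_nonneg (by positivity)]
  gcongr
  linarith [norm_nonneg x]

lemma norm_sq_masslessDirac_exp_exp_one_sub_smul_mul_exp_norm (c : C4) {x : R3} (hx : x ≠ 0) :
    ‖masslessDirac (fun y => (Real.exp (Real.exp (1 - ‖y‖)) : ℂ) • c) x‖ ^ 2 * Real.exp ‖x‖ =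
      Real.exp 1 ^ 2 * (‖(Real.exp (Real.exp (1 - ‖x‖)) : ℂ) • c‖ ^ 2 * Real.exp (-‖x‖)) := by
  have hD := hasDerivAt_exp_exp_one_sub ‖x‖
  rw [norm_masslessDirac_radial_smul c hx hD.differentiableAt, hD.deriv, norm_smul,
    Complex.norm_real, Real.norm_of_nonneg (by positivity), abs_neg, abs_of_pos (by positivity)]
  linear_combination (Real.exp (Real.exp (1 - ‖x‖)) * ‖c‖) ^ 2 * exp_one_sub_sq_mul_exp ‖x‖

/-- The explicit minimiser for the exponential weight in the massless case:
all three integrals are finite and equal. -/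
theorem attained_exponential_weight (c : C4) (ψ₀ : R3 → C4)
    (hψ₀ : ∀ x : R3, ψ₀ x = (Real.exp (Real.exp (1 - ‖x‖)) : ℂ) • c) :
    (Integrable (fun x : R3 => ‖ψ₀ x‖ ^ 2 * Real.exp (-‖x‖)) ∧
      Integrable (fun x : R3 => ‖spinOrbit ψ₀ x‖ ^ 2 * Real.exp (-‖x‖)) ∧
      Integrable (fun x : R3 => ‖masslessDirac ψ₀ x‖ ^ 2 * Real.exp ‖x‖)) ∧
    (Real.exp 1 ^ 2 * ∫ x : R3, ‖ψ₀ x‖ ^ 2 * Real.exp (-‖x‖) =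
      Real.exp 1 ^ 2 * ∫ x : R3, ‖spinOrbit ψ₀ x‖ ^ 2 * Real.exp (-‖x‖)) ∧
    (Real.exp 1 ^ 2 * ∫ x : R3, ‖spinOrbit ψ₀ x‖ ^ 2 * Real.exp (-‖x‖) =
      ∫ x : R3, ‖masslessDirac ψ₀ x‖ ^ 2 * Real.exp ‖x‖) ∧
    (c ≠ 0 → ψ₀ ≠ 0) := by
  obtain rfl : ψ₀ = fun y => (Real.exp (Real.exp (1 - ‖y‖)) : ℂ) • c := funext hψ₀
  have hso := spinOrbit_radial_smul c fun r _ => (hasDerivAt_exp_exp_one_sub r).differentiableAt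
  have hint := integrable_norm_sq_exp_exp_one_sub_smul_mul_exp_neg_norm c
  have hdirac : _ =ᵐ[volume] _ := (Measure.ae_ne volume 0).mono fun x hx =>
    norm_sq_masslessDirac_exp_exp_one_sub_smul_mul_exp_norm c hx
  refine ⟨⟨hint, by rwa [hso], (hint.const_mul _).congr hdirac.symm⟩, by rw [hso],
    by rw [hso, integral_congr_ae hdirac, integral_const_mul], fun hc hψ => hc ?_⟩
  simpa [Real.exp_ne_zero] using congrFun hψ 0
end
end
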